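/- arXiv:0803.0302 — 6 statements merged into one kernel-verified Lean document; each statement's English description precedes it below -/
import Mathlib

section
/- For r, s, k ∈ ℕ with k > 0, the number a(r,s,k) of assignments of s+k drivers to r+s spaces (under the linear parking rule) such that r spaces remain empty, s spaces are occupied, and k drivers leave, satisfies a(r,s,k) = Σ_{i=0}^{k+1} C(s+k, k+1-i) · a(r, s-1, i). -/
open Finset

/-- One step of the linear parking process: the driver with choice `c` takes the
first free space with index at least `c`, if any; otherwise the failure count increases. -/
def parkStep {n : ℕ} (p : Finset (Fin n) × ℕ) (c : Fin n) : Finset (Fin n) × ℕ :=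
  if h : ((Finset.univ \ p.1).filter (fun x => c ≤ x)).Nonempty then
    (insert (((Finset.univ \ p.1).filter (fun x => c ≤ x)).min' h) p.1, p.2)
  else
    (p.1, p.2 + 1)

/-- The set of occupied spaces and the number of drivers who fail to park,
when drivers `0, 1, ..., m-1` with choices `f 0, f 1, ..., f (m-1)` arrive in order. -/
def parkRun {n m : ℕ} (f : Fin m → Fin n) : Finset (Fin n) × ℕ :=
  (List.ofFn f).foldl parkStep (∅, 0)

/-- The defect of an assignment: the number of drivers who fail to park. -/
def defect {n m : ℕ} (f : Fin m → Fin n) : ℕ := (parkRun f).2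

/-- `cp n m k` is the number of assignments of `m` drivers to `n` spaces
under which exactly `k` drivers fail to park. -/
def cp (n m k : ℕ) : ℕ :=
  (Finset.univ.filter (fun f : Fin m → Fin n => defect f = k)).card

/-- `a r s k` is the number of assignments of `s + k` drivers to `r + s` spaces such that
exactly `k` drivers leave (and hence `s` spaces end up occupied and `r` remain empty);
it is `0` whenever one of the arguments is negative. -/
def a (r s k : ℤ) : ℕ :=
  if 0 ≤ r ∧ 0 ≤ s ∧ 0 ≤ k then cp (r + s).toNat (s + k).toNat k.toNat else 0

/-!
Sort the drivers according to whether they prefer the last space. Running the process on the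
first `n` spaces for the other drivers only, the two runs agree on the first `n` spaces; the
drivers who prefer the last space, together with those overflowing the first `n` spaces, reach
the last space, the first of them parks there and all others leave (`liftState`). So for
`k > 0` exactly `k` drivers leave iff `j + d = k + 1`, where `j` drivers prefer the last space and
`d` drivers leave the reduced run. Placing those `j` drivers among the `m` gives
`cp (n + 1) m k = ∑ j, m.choose j * cp n (m - j) (k + 1 - j)`, which is the recurrence after
substituting `i = k + 1 - j`. For `s = 0` both sides vanish: the first driver always parks.
-/

section FinTuples

lemma card_filter_fin_succ_eq_sum_cons {α : Type*} [Fintype α] [DecidableEq α] {m : ℕ}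
    (Q : (Fin (m + 1) → α) → Prop) [DecidablePred Q] :
    #{f | Q f} = ∑ c, #{f : Fin m → α | Q (Fin.cons c f)} := by
  simp only [card_filter]
  rw [← (Fin.consEquiv fun _ => α).sum_comp, Fintype.sum_prod_type]
  rfl

variable {β : Type*} [Fintype β] [DecidableEq β]

lemma card_filter_ofFn_succ_eq_sum_cons (P : List β → Prop) [DecidablePred P] (t : ℕ) :
    #{g : Fin (t + 1) → β | P (List.ofFn g)} = ∑ x, #{g : Fin t → β | P (x :: List.ofFn g)} := by
  simp [card_filter_fin_succ_eq_sum_cons, List.ofFn_succ]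

theorem card_count_none_reduceOption (P : List β → Prop) [DecidablePred P] (m j : ℕ) :
    #{f : Fin m → Option β | (List.ofFn f).count none = j ∧ P (List.ofFn f).reduceOption}
      = m.choose j * #{g : Fin (m - j) → β | P (List.ofFn g)} := by
  induction m generalizing j P with
  | zero =>
    cases j <;> simp
    split_ifs <;> rfl
  | succ m ih =>
    rw [card_filter_fin_succ_eq_sum_cons, Fintype.sum_option]
    simp only [List.ofFn_succ, Fin.cons_zero, Fin.cons_succ, List.count_cons, beq_self_eq_true,
      if_true, reduceCtorEq, beq_iff_eq, if_false, add_zero, List.reduceOption_cons_of_none,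
      List.reduceOption_cons_of_some]
    rw [sum_congr rfl fun x _ => ih (fun l => P (x :: l)) j, ← mul_sum]
    cases j with
    | zero =>
      simp only [Nat.add_one_ne_zero, false_and, Nat.choose_zero_right, one_mul, Nat.sub_zero]
      rw [card_filter_ofFn_succ_eq_sum_cons]
      simp
    | succ j =>
      simp only [Nat.add_right_cancel_iff]
      rw [ih P j, ← card_filter_ofFn_succ_eq_sum_cons, Nat.choose_succ_succ, add_mul,
        show m + 1 - (j + 1) = m - j by omega]
      congr 1
      rcases Nat.lt_or_ge j m with hj | hj
      · rw [show m - (j + 1) + 1 = m - j by omega]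
      · rw [Nat.choose_eq_zero_of_lt (by omega : m < j + 1), zero_mul, zero_mul]

end FinTuples

section Parking

variable {n : ℕ}

lemma parkStep_of_isLeast {p : Finset (Fin n) × ℕ} {c x : Fin n}
    (hx : IsLeast {y | c ≤ y ∧ y ∉ p.1} x) : parkStep p c = (insert x p.1, p.2) := by
  have hmem : x ∈ (univ \ p.1).filter (c ≤ ·) := by simpa using ⟨hx.1.2, hx.1.1⟩
  rw [parkStep, dif_pos ⟨x, hmem⟩]
  congr
  refine le_antisymm (min'_le _ _ hmem) (le_min' _ _ _ fun y hy => hx.2 ?_)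
  simp only [mem_filter, mem_sdiff, mem_univ, true_and] at hy
  exact ⟨hy.2, hy.1⟩

lemma parkStep_of_forall_mem {p : Finset (Fin n) × ℕ} {c : Fin n}
    (h : ∀ y, c ≤ y → y ∈ p.1) : parkStep p c = (p.1, p.2 + 1) := by
  rw [parkStep, dif_neg]
  rintro ⟨y, hy⟩
  simp only [mem_filter, mem_sdiff, mem_univ, true_and] at hy
  exact hy.1 (h y hy.2)

lemma exists_isLeast_vacant_or_forall_mem (p : Finset (Fin n) × ℕ) (c : Fin n) :
    (∃ x, IsLeast {y | c ≤ y ∧ y ∉ p.1} x) ∨ ∀ y, c ≤ y → y ∈ p.1 := by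
  by_cases h : ∃ y, c ≤ y ∧ y ∉ p.1
  · left
    have hne : (univ.filter fun y => c ≤ y ∧ y ∉ p.1).Nonempty := by
      simpa [Finset.Nonempty] using h
    exact ⟨_, by simpa using isLeast_min' _ hne⟩
  · exact .inr (by simpa using h)

/-- Parking on `n + 1` spaces seen from the first `n`: after `q` has been reached on the first
`n` spaces while `j` drivers preferred the last one, the `j + q.2` drivers who reached the last
space compete for it; the first one parks there and the others leave. -/
def liftState (q : Finset (Fin n) × ℕ) (j : ℕ) : Finset (Fin (n + 1)) × ℕ :=
  (q.1.map Fin.castSuccEmb ∪ (if j + q.2 = 0 then ∅ else {Fin.last n}), j + q.2 - 1)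

lemma castSucc_mem_liftState {q : Finset (Fin n) × ℕ} {j : ℕ} {y : Fin n} :
    y.castSucc ∈ (liftState q j).1 ↔ y ∈ q.1 := by
  unfold liftState
  split_ifs <;> simp [(Fin.castSucc_lt_last y).ne]

lemma last_mem_liftState {q : Finset (Fin n) × ℕ} {j : ℕ} :
    Fin.last n ∈ (liftState q j).1 ↔ j + q.2 ≠ 0 := by
  unfold liftState
  split_ifs with h <;> simp <;> omega

lemma liftState_empty : liftState ((∅ : Finset (Fin n)), 0) 0 = (∅, 0) := by
  simp [liftState]

lemma parkStep_liftState_last (q : Finset (Fin n) × ℕ) (j : ℕ) :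
    parkStep (liftState q j) (Fin.last n) = liftState q (j + 1) := by
  by_cases h : j + q.2 = 0
  · rw [parkStep_of_isLeast (x := Fin.last n)]
    · simp [liftState, h, Finset.union_comm, Finset.union_singleton]
    · refine ⟨⟨le_rfl, by simp [last_mem_liftState, h]⟩, fun y hy => hy.1⟩
  · rw [parkStep_of_forall_mem fun y hy => by
      rw [Fin.last_le_iff.mp hy, last_mem_liftState]; exact h]
    have h' : j + 1 + q.2 ≠ 0 := by omega
    simp only [liftState, h, h', if_false, Prod.mk.injEq, true_and]
    omega

lemma parkStep_liftState_castSucc (q : Finset (Fin n) × ℕ) (j : ℕ) (c : Fin n) :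
    parkStep (liftState q j) c.castSucc = liftState (parkStep q c) j := by
  rcases exists_isLeast_vacant_or_forall_mem q c with ⟨x, hx⟩ | hfull
  · have hlift : IsLeast {y | c.castSucc ≤ y ∧ y ∉ (liftState q j).1} x.castSucc := by
      refine ⟨⟨Fin.castSucc_le_castSucc_iff.mpr hx.1.1, castSucc_mem_liftState.not.mpr hx.1.2⟩,
        fun y hy => ?_⟩
      induction y using Fin.lastCases with
      | last => exact (Fin.castSucc_lt_last x).le
      | cast y =>
        exact Fin.castSucc_le_castSucc_iff.mpr
          (hx.2 ⟨Fin.castSucc_le_castSucc_iff.mp hy.1, castSucc_mem_liftState.not.mp hy.2⟩)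
    rw [parkStep_of_isLeast hlift, parkStep_of_isLeast hx, liftState, liftState]
    simp [Finset.map_insert, Finset.insert_union]
  · rw [parkStep_of_forall_mem hfull]
    by_cases h : j + q.2 = 0
    · have hlast : IsLeast {y | c.castSucc ≤ y ∧ y ∉ (liftState q j).1} (Fin.last n) := by
        refine ⟨⟨Fin.le_last _, by simp [last_mem_liftState, h]⟩, fun y hy => ?_⟩
        induction y using Fin.lastCases with
        | last => exact le_rfl
        | cast y =>
          exact absurd (castSucc_mem_liftState.mpr
            (hfull y (Fin.castSucc_le_castSucc_iff.mp hy.1))) hy.2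
      rw [parkStep_of_isLeast hlast]
      simp [liftState, h, Finset.union_comm, Finset.union_singleton]
    · rw [parkStep_of_forall_mem fun y hy => ?_]
      · have h' : j + (q.2 + 1) ≠ 0 := by omega
        simp only [liftState, h, h', if_false, Prod.mk.injEq, true_and]
        omega
      induction y using Fin.lastCases with
      | last => exact last_mem_liftState.mpr h
      | cast y => exact castSucc_mem_liftState.mpr (hfull y (Fin.castSucc_le_castSucc_iff.mp hy))

lemma foldl_parkStep_liftState (L : List (Fin (n + 1))) (q : Finset (Fin n) × ℕ) (j : ℕ) :
    L.foldl parkStep (liftState q j) =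
      liftState ((L.map finSuccEquivLast).reduceOption.foldl parkStep q)
        (j + (L.map finSuccEquivLast).count none) := by
  induction L generalizing q j with
  | nil => simp
  | cons c L ih =>
    induction c using Fin.lastCases with
    | last =>
      simp [parkStep_liftState_last, ih, List.reduceOption_cons_of_none, add_assoc, add_comm]
    | cast c => simp [parkStep_liftState_castSucc, ih, List.reduceOption_cons_of_some]

def listDefect (L : List (Fin n)) : ℕ := (L.foldl parkStep (∅, 0)).2

lemma defect_eq_count_none_add_listDefect {m : ℕ} (f : Fin m → Fin (n + 1)) :
    defect f = (List.ofFn (finSuccEquivLast ∘ f)).count none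
      + listDefect (List.ofFn (finSuccEquivLast ∘ f)).reduceOption - 1 := by
  have h := foldl_parkStep_liftState (List.ofFn f) (∅, 0) 0
  rw [liftState_empty, ← List.ofFn_comp'] at h
  rw [defect, parkRun, h, liftState, zero_add, listDefect]
  rfl

theorem cp_succ {m k : ℕ} (hk : 0 < k) :
    cp (n + 1) m k = ∑ j ∈ range (k + 2), m.choose j * cp n (m - j) (k + 1 - j) := by
  rw [cp, card_eq_sum_card_fiberwise
    (f := fun f => (List.ofFn (finSuccEquivLast ∘ f)).count none) (t := range (k + 2))]
  · refine sum_congr rfl fun j hj => ?_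
    change _ = m.choose j * #{g : Fin (m - j) → Fin n | listDefect (List.ofFn g) = k + 1 - j}
    rw [filter_filter]
    refine (card_equiv ((Equiv.refl _).arrowCongr finSuccEquivLast) fun f => ?_).trans
      (card_count_none_reduceOption (fun l => listDefect l = k + 1 - j) m j)
    simp only [mem_filter, mem_univ, true_and, mem_range] at hj ⊢
    change _ ↔ (List.ofFn (finSuccEquivLast ∘ f)).count none = j ∧
      listDefect (List.ofFn (finSuccEquivLast ∘ f)).reduceOption = k + 1 - j
    rw [defect_eq_count_none_add_listDefect]
    omega
  · intro f hf
    simp only [coe_filter, mem_univ, true_and, Set.mem_ofPred_eq, coe_range, Set.mem_Iio] at hf ⊢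
    have := defect_eq_count_none_add_listDefect f
    omega

lemma foldl_parkStep_snd_le (L : List (Fin n)) (p : Finset (Fin n) × ℕ) :
    (L.foldl parkStep p).2 ≤ p.2 + L.length := by
  induction L generalizing p with
  | nil => simp
  | cons c L ih =>
    have hstep : (parkStep p c).2 ≤ p.2 + 1 := by
      unfold parkStep
      split <;> simp
    simpa [List.foldl_cons, add_assoc, add_comm 1] using (ih (parkStep p c)).trans (by omega)

lemma defect_lt {m : ℕ} (f : Fin (m + 1) → Fin n) : defect f < m + 1 := by
  have hfirst : (parkStep ((∅ : Finset (Fin n)), 0) (f 0)).2 = 0 := by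
    rw [parkStep, dif_pos ⟨f 0, by simp⟩]
  have := foldl_parkStep_snd_le (List.ofFn fun i : Fin m => f i.succ) (parkStep (∅, 0) (f 0))
  rw [hfirst, List.length_ofFn] at this
  rw [defect, parkRun, List.ofFn_succ, List.foldl_cons]
  omega

lemma cp_self_eq_zero {k : ℕ} (hk : 0 < k) : cp n k k = 0 := by
  obtain ⟨m, rfl⟩ := Nat.exists_eq_add_one_of_ne_zero hk.ne'
  rw [cp, card_eq_zero, filter_eq_empty_iff]
  exact fun f _ => (defect_lt f).ne

end Parking

lemma a_natCast (r s k : ℕ) : a r s k = cp (r + s) (s + k) k := by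
  rw [a, if_pos ⟨Int.natCast_nonneg r, Int.natCast_nonneg s, Int.natCast_nonneg k⟩]
  congr 1

lemma a_of_neg {r s k : ℤ} (hs : s < 0) : a r s k = 0 := by
  rw [a, if_neg (by omega)]

theorem stmt2 (r s k : ℕ) (hk : 0 < k) :
    a r s k = ∑ i ∈ Finset.range (k + 2),
      Nat.choose (s + k) (k + 1 - i) * a r ((s : ℤ) - 1) i := by
  rcases s with _ | s
  · rw [a_natCast, zero_add, cp_self_eq_zero hk]
    simp [a_of_neg]
  · have hshift (i : ℕ) : a r ((↑(s + 1) : ℤ) - 1) i = cp (r + s) (s + i) i := by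
      rw [Nat.cast_succ, add_sub_cancel_right, a_natCast]
    rw [a_natCast, ← add_assoc, cp_succ hk, ← sum_range_reflect]
    refine sum_congr rfl fun j hj => ?_
    have hjk : j ≤ k + 1 := Nat.lt_succ_iff.mp (mem_range.mp hj)
    rw [hshift, show k + 2 - 1 - j = k + 1 - j by omega,
      show s + 1 + k - (k + 1 - j) = s + j by omega, show k + 1 - (k + 1 - j) = j by omega]
end

section
/- For r, s ∈ ℕ not both zero, a(r,s,0) = a(r-1,s,0) + Σ_{i=0}^{1} C(s, 1-i) · a(r, s-1, i), i.e., a(r,s,0) = a(r-1,s,0) + s·a(r,s-1,0) + a(r,s-1,1). -/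
open Finset

/-!
Split the defect-free assignments of `m + 1` drivers to `n + 1` spaces according to whether some
driver chooses the last space. A driver choosing the last space either takes it or leaves, so in a
defect-free assignment at most one driver chooses it; deleting that driver leaves a defect-free
assignment to the first `n` spaces, and conversely such a driver can be inserted at any of the
`m + 1` positions without disturbing the others. If nobody chooses the last space, the run on
`n + 1` spaces is the run on `n` spaces except that the first driver who would leave takes the last
space instead, so the assignment is defect-free exactly when its defect on `n` spaces is `0` or `1`.
-/

theorem List.ofFn_insertNth {α : Type*} {m : ℕ} (i : Fin (m + 1)) (x : α) (g : Fin m → α) :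
    List.ofFn (i.insertNth x g) = (List.ofFn g).take i ++ x :: (List.ofFn g).drop i := by
  induction m with
  | zero => rw [Fin.fin_one_eq_zero i]; simp [Fin.insertNth_zero']
  | succ m ih =>
    induction i using Fin.cases with
    | zero => simp [Fin.insertNth_zero']
    | succ i =>
      rw [← Fin.cons_self_tail g, Fin.insertNth_succ_cons, List.ofFn_cons, List.ofFn_cons, ih]
      simp

section ParkStep

variable {n : ℕ}

lemma parkStep_snd_add (P : Finset (Fin n)) (k j : ℕ) (c : Fin n) :
    parkStep (P, k + j) c = Prod.map id (· + j) (parkStep (P, k) c) := by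
  unfold parkStep; split <;> simp [Nat.add_right_comm]

lemma foldl_parkStep_snd_add (l : List (Fin n)) (P : Finset (Fin n)) (k j : ℕ) :
    l.foldl parkStep (P, k + j) = Prod.map id (· + j) (l.foldl parkStep (P, k)) := by
  induction l generalizing P k with
  | nil => rfl
  | cons c t ih =>
    rw [List.foldl_cons, List.foldl_cons, parkStep_snd_add]
    exact ih _ _

lemma le_foldl_parkStep_snd (l : List (Fin n)) (P : Finset (Fin n)) (k : ℕ) :
    k ≤ (l.foldl parkStep (P, k)).2 := by
  have := congrArg Prod.snd (foldl_parkStep_snd_add l P 0 k)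
  simp only [zero_add, Prod.map_snd] at this
  omega

lemma fst_subset_parkStep_fst (p : Finset (Fin n) × ℕ) (c : Fin n) :
    p.1 ⊆ (parkStep p c).1 := by
  unfold parkStep; split
  exacts [subset_insert _ _, subset_rfl]

lemma snd_le_parkStep_snd (p : Finset (Fin n) × ℕ) (c : Fin n) : p.2 ≤ (parkStep p c).2 := by
  unfold parkStep; split <;> simp

lemma card_parkStep_fst_add_snd (p : Finset (Fin n) × ℕ) (c : Fin n) :
    #(parkStep p c).1 + (parkStep p c).2 = #p.1 + p.2 + 1 := by
  unfold parkStep; split_ifs with h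
  · have hm := Finset.min'_mem _ h
    simp only [mem_filter, mem_sdiff] at hm
    simp only [card_insert_of_notMem hm.1.2]
    omega
  · simp only; omega

lemma card_foldl_parkStep_fst_add_snd (l : List (Fin n)) (p : Finset (Fin n) × ℕ) :
    #(l.foldl parkStep p).1 + (l.foldl parkStep p).2 = #p.1 + p.2 + l.length := by
  induction l generalizing p with
  | nil => rfl
  | cons c t ih =>
    rw [List.foldl_cons, ih, card_parkStep_fst_add_snd, List.length_cons]
    omega

lemma parkStep_last (p : Finset (Fin (n + 1)) × ℕ) :
    parkStep p (Fin.last n) =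
      if Fin.last n ∈ p.1 then (p.1, p.2 + 1) else (insert (Fin.last n) p.1, p.2) := by
  unfold parkStep
  by_cases h : Fin.last n ∈ p.1
  · have : (univ \ p.1).filter (Fin.last n ≤ ·) = ∅ := by
      ext x; by_cases hx : x = Fin.last n <;> simp_all [Fin.last_le_iff]
    rw [dif_neg (by rw [this]; exact not_nonempty_empty), if_pos h]
  · have : (univ \ p.1).filter (Fin.last n ≤ ·) = {Fin.last n} := by
      ext x; by_cases hx : x = Fin.last n <;> simp_all [Fin.last_le_iff]
    simp only [this, dif_pos (singleton_nonempty _), min'_singleton, if_neg h]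

lemma sdiff_insert_last_map_castSuccEmb (P : Finset (Fin n)) :
    univ \ insert (Fin.last n) (P.map Fin.castSuccEmb) = (univ \ P).map Fin.castSuccEmb := by
  ext x; cases x using Fin.lastCases <;> simp [Fin.castSucc_ne_last]

lemma sdiff_map_castSuccEmb (P : Finset (Fin n)) :
    univ \ P.map Fin.castSuccEmb = insert (Fin.last n) ((univ \ P).map Fin.castSuccEmb) := by
  ext x; cases x using Fin.lastCases <;> simp [Fin.castSucc_ne_last]

lemma filter_castSucc_le_map_castSuccEmb (S : Finset (Fin n)) (c : Fin n) :
    (S.map Fin.castSuccEmb).filter (c.castSucc ≤ ·) =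
      (S.filter (c ≤ ·)).map Fin.castSuccEmb := by
  simp [filter_map, Function.comp_def]

lemma min'_map_castSuccEmb (S : Finset (Fin n)) (h : S.Nonempty) :
    (S.map Fin.castSuccEmb).min' (h.map) = (S.min' h).castSucc := by
  simp only [map_eq_image]
  exact min'_image Fin.strictMono_castSucc.monotone S _

end ParkStep

section Lift

variable {n : ℕ}

lemma parkStep_castSucc_of_last_mem (P : Finset (Fin n)) (k : ℕ) (c : Fin n) :
    parkStep (insert (Fin.last n) (P.map Fin.castSuccEmb), k) c.castSucc =
      (insert (Fin.last n) ((parkStep (P, k) c).1.map Fin.castSuccEmb),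
        (parkStep (P, k) c).2) := by
  unfold parkStep
  simp only [sdiff_insert_last_map_castSuccEmb, filter_castSucc_le_map_castSuccEmb]
  by_cases h : ((univ \ P).filter (c ≤ ·)).Nonempty
  · rw [dif_pos h.map, dif_pos h, min'_map_castSuccEmb _ h, map_insert, insert_comm]
    rfl
  · rw [dif_neg (by simpa using h), dif_neg h]

lemma parkStep_castSucc_of_last_notMem (P : Finset (Fin n)) (k : ℕ) (c : Fin n) :
    parkStep (P.map Fin.castSuccEmb, k) c.castSucc =
      if ((univ \ P).filter (c ≤ ·)).Nonempty then ((parkStep (P, k) c).1.map Fin.castSuccEmb, k)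
      else (insert (Fin.last n) (P.map Fin.castSuccEmb), k) := by
  unfold parkStep
  simp only [sdiff_map_castSuccEmb, filter_insert, if_pos (Fin.le_last _),
    filter_castSucc_le_map_castSuccEmb, dif_pos (insert_nonempty _ _)]
  by_cases h : ((univ \ P).filter (c ≤ ·)).Nonempty
  · rw [if_pos h, dif_pos h, min'_insert _ _ h.map, min'_map_castSuccEmb _ h,
      min_eq_right (Fin.le_last _), map_insert]
    rfl
  · rw [if_neg h]
    simp only [not_nonempty_iff_eq_empty.1 h, map_empty, insert_empty, min'_singleton]

lemma foldl_map_castSucc_of_last_mem (l : List (Fin n)) (P : Finset (Fin n)) (k : ℕ) :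
    (l.map Fin.castSucc).foldl parkStep (insert (Fin.last n) (P.map Fin.castSuccEmb), k) =
      (insert (Fin.last n) ((l.foldl parkStep (P, k)).1.map Fin.castSuccEmb),
        (l.foldl parkStep (P, k)).2) := by
  induction l generalizing P k with
  | nil => rfl
  | cons c t ih =>
    simp only [List.map_cons, List.foldl_cons, parkStep_castSucc_of_last_mem, ih]

lemma foldl_map_castSucc_of_last_notMem (l : List (Fin n)) (P : Finset (Fin n)) (k : ℕ) :
    (l.map Fin.castSucc).foldl parkStep (P.map Fin.castSuccEmb, k) =
      if (l.foldl parkStep (P, k)).2 = k then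
        ((l.foldl parkStep (P, k)).1.map Fin.castSuccEmb, k)
      else (insert (Fin.last n) ((l.foldl parkStep (P, k)).1.map Fin.castSuccEmb),
        (l.foldl parkStep (P, k)).2 - 1) := by
  induction l generalizing P k with
  | nil => simp
  | cons c t ih =>
    rw [List.map_cons, List.foldl_cons, List.foldl_cons, parkStep_castSucc_of_last_notMem]
    by_cases h : ((univ \ P).filter (c ≤ ·)).Nonempty
    · obtain ⟨Q, hQ⟩ : ∃ Q, parkStep (P, k) c = (Q, k) :=
        ⟨_, by unfold parkStep; rw [dif_pos h]⟩
      rw [if_pos h, hQ, ih]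
    · have hstep : parkStep (P, k) c = (P, k + 1) := by
        unfold parkStep; rw [dif_neg h]
      have hk := le_foldl_parkStep_snd t P (k + 1)
      rw [if_neg h, foldl_map_castSucc_of_last_mem, hstep, if_neg (by omega),
        foldl_parkStep_snd_add t P k 1]
      simp

end Lift

section Defect

variable {n m : ℕ}

-- With truncated subtraction, since a defect-free run stays defect-free.
lemma defect_castSucc_comp (g : Fin m → Fin n) : defect (Fin.castSucc ∘ g) = defect g - 1 := by
  have h := foldl_map_castSucc_of_last_notMem (List.ofFn g) ∅ 0
  rw [map_empty, List.map_ofFn] at h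
  unfold defect parkRun
  rw [h]
  split_ifs with h0 <;> simp [h0]

lemma defect_insertNth_last_castSucc_comp (i : Fin (m + 1)) (g : Fin m → Fin n) :
    defect (i.insertNth (Fin.last n) (Fin.castSucc ∘ g)) = defect g := by
  unfold defect parkRun
  rw [List.ofFn_insertNth, ← List.map_ofFn, ← List.map_take, ← List.map_drop,
    List.foldl_append, List.foldl_cons]
  conv_rhs => rw [← List.take_append_drop i (List.ofFn g), List.foldl_append]
  have h := foldl_map_castSucc_of_last_notMem ((List.ofFn g).take i) ∅ 0
  rw [map_empty] at h
  rw [h]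
  obtain ⟨Q, k⟩ := ((List.ofFn g).take i).foldl parkStep (∅, 0)
  rcases Nat.eq_zero_or_pos k with rfl | hk
  · rw [if_pos rfl, parkStep_last, if_neg (by simp), foldl_map_castSucc_of_last_mem]
  · rw [if_neg hk.ne', parkStep_last, if_pos (mem_insert_self _ _), Nat.sub_add_cancel hk,
      foldl_map_castSucc_of_last_mem]

-- Once the last space is taken, every later driver choosing it leaves.
lemma count_last_add_le_foldl_parkStep_snd (l : List (Fin (n + 1)))
    (p : Finset (Fin (n + 1)) × ℕ) :
    l.count (Fin.last n) + p.2 ≤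
      (l.foldl parkStep p).2 + if Fin.last n ∈ p.1 then 0 else 1 := by
  induction l generalizing p with
  | nil => split_ifs <;> simp
  | cons c t ih =>
    rw [List.foldl_cons, List.count_cons]
    by_cases hc : c = Fin.last n
    · subst hc
      have := ih (parkStep p (Fin.last n))
      rw [parkStep_last] at this ⊢
      by_cases hp : Fin.last n ∈ p.1 <;> simp_all <;> omega
    · have := ih (parkStep p c)
      have h1 := fst_subset_parkStep_fst p c
      have h2 := snd_le_parkStep_snd p c
      by_cases hp : Fin.last n ∈ p.1
      · simp_all [h1 hp]; omega
      · split_ifs at this <;> simp_all <;> omega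

lemma count_last_ofFn_le_one_of_defect_eq_zero {f : Fin m → Fin (n + 1)} (hf : defect f = 0) :
    (List.ofFn f).count (Fin.last n) ≤ 1 := by
  have := count_last_add_le_foldl_parkStep_snd (List.ofFn f) (∅, 0)
  simp only [add_zero, notMem_empty, if_false] at this
  unfold defect parkRun at hf
  omega

lemma apply_ne_last_of_defect_eq_zero {f : Fin (m + 1) → Fin (n + 1)} (hf : defect f = 0)
    {i j : Fin (m + 1)} (hi : f i = Fin.last n) (hji : j ≠ i) : f j ≠ Fin.last n := by
  have hcount : (List.ofFn f).count (Fin.last n) =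
      (List.ofFn (i.removeNth f)).count (Fin.last n) + 1 := by
    conv_lhs => rw [← Fin.insertNth_self_removeNth i f, hi, List.ofFn_insertNth]
    rw [List.count_append, List.count_cons_self, ← add_assoc, ← List.count_append,
      List.take_append_drop]
  have hnone : Fin.last n ∉ List.ofFn (i.removeNth f) := List.count_eq_zero.1 (by
    have := count_last_ofFn_le_one_of_defect_eq_zero hf; omega)
  obtain ⟨t, rfl⟩ := Fin.exists_succAbove_eq hji
  exact fun h => hnone (List.mem_ofFn.2 ⟨t, h⟩)

end Defect

section Counting

variable {n m : ℕ}

lemma cp_zero_zero (N : ℕ) : cp N 0 0 = 1 := by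
  simp [cp, defect, parkRun]

lemma cp_zero_of_lt {N : ℕ} (h : N < m) : cp N m 0 = 0 := by
  rw [cp, card_eq_zero, filter_eq_empty_iff]
  intro f _ hf
  have hc := card_foldl_parkStep_fst_add_snd (List.ofFn f) ((∅ : Finset (Fin N)), 0)
  have hle := card_le_univ ((List.ofFn f).foldl parkStep ((∅ : Finset (Fin N)), 0)).1
  simp only [card_empty, List.length_ofFn, Fintype.card_fin] at hc hle
  unfold defect parkRun at hf
  omega

lemma card_filter_defect_eq_zero_forall_ne_last :
    #{f : Fin m → Fin (n + 1) | defect f = 0 ∧ ∀ i, f i ≠ Fin.last n} =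
      cp n m 0 + cp n m 1 := by
  have hle : #{g : Fin m → Fin n | defect g ≤ 1} = cp n m 0 + cp n m 1 := by
    rw [cp, cp, ← card_union_of_disjoint (disjoint_filter.2 fun _ _ h0 h1 => by omega),
      ← filter_or]
    exact congrArg card (filter_congr fun g _ => Nat.le_one_iff_eq_zero_or_eq_one)
  rw [← hle]
  symm
  apply card_bij (fun g _ => Fin.castSucc ∘ g)
  · intro g hg
    simp only [mem_filter, mem_univ, true_and, defect_castSucc_comp, Function.comp_apply] at hg ⊢
    exact ⟨by omega, fun i => Fin.castSucc_ne_last _⟩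
  · intro g _ g' _ h
    exact (Fin.castSucc_injective n).comp_left h
  · intro f hf
    simp only [mem_filter, mem_univ, true_and] at hf
    refine ⟨fun j => (f j).castPred (hf.2 j), ?_, funext fun j => Fin.castSucc_castPred _ _⟩
    have hd := defect_castSucc_comp (fun j => (f j).castPred (hf.2 j))
    simp only [Function.comp_def, Fin.castSucc_castPred, hf.1] at hd
    simp only [mem_filter, mem_univ, true_and]
    omega

lemma card_filter_defect_eq_zero_apply_eq_last (i : Fin (m + 1)) :
    #{f : Fin (m + 1) → Fin (n + 1) | defect f = 0 ∧ f i = Fin.last n} = cp n m 0 := by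
  symm
  apply card_bij (fun g _ => i.insertNth (Fin.last n) (Fin.castSucc ∘ g))
  · intro g hg
    simp only [mem_filter, mem_univ, true_and] at hg ⊢
    exact ⟨by rw [defect_insertNth_last_castSucc_comp, hg], Fin.insertNth_apply_same _ _ _⟩
  · intro g _ g' _ h
    exact (Fin.castSucc_injective n).comp_left (Fin.insertNth_right_injective _ h)
  · intro f hf
    simp only [mem_filter, mem_univ, true_and] at hf
    obtain ⟨hf, hi⟩ := hf
    set g : Fin m → Fin n := fun j =>
      (f (i.succAbove j)).castPred (apply_ne_last_of_defect_eq_zero hf hi (Fin.succAbove_ne i j))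
    have hfg : i.insertNth (Fin.last n) (Fin.castSucc ∘ g) = f := by
      rw [Fin.insertNth_eq_iff]
      exact ⟨hi.symm, funext fun j => Fin.castSucc_castPred _ _⟩
    refine ⟨g, ?_, hfg⟩
    simp only [mem_filter, mem_univ, true_and]
    rw [← defect_insertNth_last_castSucc_comp i, hfg, hf]

lemma card_filter_defect_eq_zero_exists_last :
    #{f : Fin (m + 1) → Fin (n + 1) | defect f = 0 ∧ ∃ i, f i = Fin.last n} =
      (m + 1) * cp n m 0 := by
  have hunion :
      ({f : Fin (m + 1) → Fin (n + 1) | defect f = 0 ∧ ∃ i, f i = Fin.last n} : Finset _) =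
        univ.biUnion fun i => {f | defect f = 0 ∧ f i = Fin.last n} := by
    ext f; simp
  rw [hunion, card_biUnion]
  · simp [card_filter_defect_eq_zero_apply_eq_last]
  · intro i _ j _ hij
    exact disjoint_filter.2 fun f _ hi hj =>
      apply_ne_last_of_defect_eq_zero hi.1 hi.2 hij.symm hj.2

theorem cp_succ_succ_zero (n m : ℕ) :
    cp (n + 1) (m + 1) 0 = cp n (m + 1) 0 + (m + 1) * cp n m 0 + cp n (m + 1) 1 := by
  rw [cp, ← card_filter_add_card_filter_not (p := fun f => ∃ i, f i = Fin.last n),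
    filter_filter, filter_filter]
  simp only [not_exists]
  rw [card_filter_defect_eq_zero_exists_last, card_filter_defect_eq_zero_forall_ne_last]
  ring

end Counting

lemma a_natCast_zero (r s : ℕ) : a r s 0 = cp (r + s) s 0 := by
  rw [a, if_pos (by omega)]
  rfl

lemma a_natCast_one (r s : ℕ) : a r s 1 = cp (r + s) (s + 1) 1 := by
  rw [a, if_pos (by omega)]
  rfl

lemma a_of_neg_left {r : ℤ} (s k : ℤ) (hr : r < 0) : a r s k = 0 :=
  if_neg fun h => hr.not_ge h.1

lemma a_of_neg_middle (r : ℤ) {s : ℤ} (k : ℤ) (hs : s < 0) : a r s k = 0 :=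
  if_neg fun h => hs.not_ge h.2.1

theorem stmt3 (r s : ℕ) (h : ¬(r = 0 ∧ s = 0)) :
    a r s 0 = a ((r : ℤ) - 1) s 0 + s * a r ((s : ℤ) - 1) 0 + a r ((s : ℤ) - 1) 1 := by
  rcases s with _ | s
  · obtain ⟨r, rfl⟩ := Nat.exists_eq_add_one_of_ne_zero (by omega : r ≠ 0)
    rw [show ((r + 1 : ℕ) : ℤ) - 1 = r by omega, a_natCast_zero, a_natCast_zero, Nat.cast_zero,
      zero_sub, a_of_neg_middle _ 0 (by norm_num), a_of_neg_middle _ 1 (by norm_num), cp_zero_zero,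
      cp_zero_zero]
  rw [show ((s + 1 : ℕ) : ℤ) - 1 = s by omega, a_natCast_zero, a_natCast_zero, a_natCast_one]
  rcases r with _ | r
  · rw [a_of_neg_left _ _ (by omega), zero_add, zero_add, zero_add, cp_succ_succ_zero,
      cp_zero_of_lt (Nat.lt_succ_self s), zero_add]
  · rw [show ((r + 1 : ℕ) : ℤ) - 1 = r by omega, a_natCast_zero,
      show r + 1 + (s + 1) = r + s + 1 + 1 by ring, cp_succ_succ_zero]
    ring_nf
end

section
/- For all r, s ∈ ℕ, a(r,s,0) = (r+1)·(r+s+1)^(s-1), where a(r,s,0) is the number of assignments of s drivers to r+s spaces such that all drivers park successfully (so s spaces are occupied and r remain empty). (For s = 0 interpret the formula as 1 when r+s+1 > 0, i.e., (r+1)·(r+1)^(-1) = 1.) -/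
/-! Pollak's circular argument. Add one space to the lot and let drivers park circularly on
`Fin (n + 1)`, wrapping around when no space at or after their choice is free. Each of the
`(n + 1) ^ m` preference functions then leaves exactly `n + 1 - m` spaces free, and shifting all
preferences by `d` shifts the occupied set by `d`, so every space is left free by the same number
`(n + 1) ^ (m - 1) * (n + 1 - m)` of functions. A linear assignment on `Fin n` parks everybody
exactly when the circular run of the same preferences leaves the extra space `n` free. -/

open Finset

namespace Parking

section Circular

variable {N : ℕ}

def circStep (S : Finset (Fin N)) (c : Fin N) : Finset (Fin N) :=
  if h : (univ.filter fun k => c + k ∉ S).Nonempty then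
    insert (c + (univ.filter fun k => c + k ∉ S).min' h) S
  else S

def circRun {m : ℕ} (g : Fin m → Fin N) : Finset (Fin N) :=
  (List.ofFn g).foldl circStep ∅

lemma subset_circStep (S : Finset (Fin N)) (c : Fin N) : S ⊆ circStep S c := by
  unfold circStep
  split
  · exact subset_insert _ _
  · exact subset_rfl

lemma card_circStep [NeZero N] {S : Finset (Fin N)} (hS : #S < N) (c : Fin N) :
    #(circStep S c) = #S + 1 := by
  obtain ⟨x, -, hx⟩ :=
    exists_mem_notMem_of_card_lt_card (s := S) (t := univ) (by simpa using hS)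
  have h : (univ.filter fun k => c + k ∉ S).Nonempty := ⟨x - c, by simp [hx]⟩
  rw [circStep, dif_pos h, card_insert_of_notMem (mem_filter.mp (min'_mem _ h)).2]

lemma circStep_eq_insert_of_le [NeZero N] {S : Finset (Fin N)} {c x : Fin N} (hcx : c ≤ x)
    (hx : x ∉ S) (hS : ∀ y, c ≤ y → y < x → y ∈ S) : circStep S c = insert x S := by
  have hmem : x - c ∈ univ.filter fun k => c + k ∉ S := by simpa using hx
  have hmin : (univ.filter fun k => c + k ∉ S).min' ⟨_, hmem⟩ = x - c := by
    refine le_antisymm (min'_le _ _ hmem) (le_min' _ _ _ fun k hk => ?_)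
    by_contra! hlt
    rw [Fin.lt_def, Fin.sub_val_of_le hcx] at hlt
    have hck : (c + k).val = c.val + k.val := Fin.val_add_eq_of_add_lt (by omega)
    refine (mem_filter.mp hk).2 (hS _ ?_ ?_)
    · rw [Fin.le_def]; omega
    · rw [Fin.lt_def]; omega
  rw [circStep, dif_pos ⟨_, hmem⟩, hmin, add_sub_cancel]

lemma self_mem_circStep [NeZero N] (S : Finset (Fin N)) (c : Fin N) : c ∈ circStep S c := by
  by_cases hc : c ∈ S
  · exact subset_circStep S c hc
  · rw [circStep_eq_insert_of_le le_rfl hc fun y hcy hyc => absurd hcy (not_le.mpr hyc)]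
    exact mem_insert_self c S

lemma circStep_map_addRight [NeZero N] (S : Finset (Fin N)) (c d : Fin N) :
    circStep (S.map (Equiv.addRight d).toEmbedding) (c + d)
      = (circStep S c).map (Equiv.addRight d).toEmbedding := by
  have hfree : (univ.filter fun k => c + d + k ∉ S.map (Equiv.addRight d).toEmbedding)
      = univ.filter fun k => c + k ∉ S := by
    ext k
    simp [add_right_comm c d k]
  unfold circStep
  rw [hfree]
  split
  · rw [map_insert, Equiv.coe_toEmbedding, Equiv.coe_addRight, add_right_comm]
  · rfl

lemma subset_foldl_circStep (l : List (Fin N)) (S : Finset (Fin N)) :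
    S ⊆ l.foldl circStep S := by
  induction l generalizing S with
  | nil => exact subset_rfl
  | cons c l ih => exact (subset_circStep S c).trans (ih _)

lemma mem_foldl_circStep [NeZero N] {l : List (Fin N)} {c : Fin N} (hc : c ∈ l)
    (S : Finset (Fin N)) : c ∈ l.foldl circStep S := by
  induction l generalizing S with
  | nil => simp at hc
  | cons a l ih =>
    rcases List.mem_cons.mp hc with rfl | hc
    · exact subset_foldl_circStep l _ (self_mem_circStep S c)
    · exact ih hc _

lemma card_foldl_circStep [NeZero N] (l : List (Fin N)) (S : Finset (Fin N))
    (h : #S + l.length ≤ N) : #(l.foldl circStep S) = #S + l.length := by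
  induction l generalizing S with
  | nil => rfl
  | cons c l ih =>
    simp only [List.length_cons] at h
    rw [List.foldl_cons, ih _ (by rw [card_circStep (by omega)]; omega),
      card_circStep (by omega), List.length_cons, add_right_comm, add_assoc]

lemma foldl_circStep_map_addRight [NeZero N] (l : List (Fin N)) (S : Finset (Fin N)) (d : Fin N) :
    (l.map (· + d)).foldl circStep (S.map (Equiv.addRight d).toEmbedding)
      = (l.foldl circStep S).map (Equiv.addRight d).toEmbedding := by
  induction l generalizing S with
  | nil => rfl
  | cons c l ih => rw [List.map_cons, List.foldl_cons, List.foldl_cons, circStep_map_addRight, ih]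

variable {m : ℕ}

lemma mem_circRun [NeZero N] (g : Fin m → Fin N) (i : Fin m) : g i ∈ circRun g :=
  mem_foldl_circStep (List.mem_ofFn.mpr ⟨i, rfl⟩) ∅

lemma card_circRun [NeZero N] (g : Fin m → Fin N) (h : m ≤ N) : #(circRun g) = m := by
  simpa [circRun] using card_foldl_circStep (List.ofFn g) ∅ (by simpa using h)

lemma circRun_add_const [NeZero N] (g : Fin m → Fin N) (d : Fin N) :
    circRun (g + Function.const _ d) = (circRun g).map (Equiv.addRight d).toEmbedding := by
  have := foldl_circStep_map_addRight (List.ofFn g) ∅ d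
  rwa [map_empty, List.map_ofFn] at this

lemma card_filter_notMem_circRun_eq [NeZero N] (e e' : Fin N) :
    #{g : Fin m → Fin N | e ∉ circRun g} = #{g : Fin m → Fin N | e' ∉ circRun g} := by
  refine card_equiv (Equiv.addRight (Function.const _ (e' - e))) fun g => ?_
  simp [circRun_add_const, mem_map_equiv]

lemma mul_card_filter_notMem_circRun [NeZero N] (e : Fin N) (h : m ≤ N) :
    N * #{g : Fin m → Fin N | e ∉ circRun g} = N ^ m * (N - m) := by
  calc N * #{g : Fin m → Fin N | e ∉ circRun g}
      = ∑ e' : Fin N, #{g : Fin m → Fin N | e' ∉ circRun g} := by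
        simp [card_filter_notMem_circRun_eq _ e]
    _ = ∑ g : Fin m → Fin N, #(circRun g)ᶜ := by
        simpa [bipartiteAbove, bipartiteBelow, compl_eq_univ_sdiff, filter_notMem_eq_sdiff] using
          sum_card_bipartiteAbove_eq_sum_card_bipartiteBelow (fun e g => e ∉ circRun g)
            (s := univ) (t := univ)
    _ = N ^ m * (N - m) := by simp [card_compl, card_circRun _ h]

end Circular

section Linear

variable {n : ℕ}

/-- Linear parking on `Fin n` agrees with circular parking on `Fin (n + 1)` until the first
linear failure, and that failure fills the extra space `last n` of the circular process. -/
def Synced (p : Finset (Fin n) × ℕ) (T : Finset (Fin (n + 1))) : Prop :=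
  (p.2 = 0 ∧ T = p.1.map Fin.castSuccEmb) ∨ (p.2 ≠ 0 ∧ Fin.last n ∈ T)

lemma circStep_map_castSucc {S : Finset (Fin n)} {c : Fin n} {x : Fin (n + 1)}
    (hcx : c.castSucc ≤ x) (hx : x ∉ S.map Fin.castSuccEmb)
    (hS : ∀ y : Fin n, c ≤ y → y.castSucc < x → y ∈ S) :
    circStep (S.map Fin.castSuccEmb) c.castSucc = insert x (S.map Fin.castSuccEmb) := by
  refine circStep_eq_insert_of_le hcx hx fun y hcy hyx => ?_
  obtain ⟨y, rfl⟩ := Fin.exists_castSucc_eq.mpr (Fin.ne_last_of_lt hyx)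
  exact mem_map_of_mem _ (hS y (Fin.castSucc_le_castSucc_iff.mp hcy) hyx)

lemma synced_parkStep {p : Finset (Fin n) × ℕ} {T : Finset (Fin (n + 1))} (h : Synced p T)
    (c : Fin n) : Synced (parkStep p c) (circStep T c.castSucc) := by
  obtain ⟨hp, rfl⟩ | ⟨hp, hT⟩ := h
  · set F := (univ \ p.1).filter (fun x => c ≤ x)
    have hfree : ∀ y, c ≤ y → y ∉ p.1 → y ∈ F := fun y hcy hy => by simp [F, hy, hcy]
    by_cases hF : F.Nonempty
    · have hx := mem_filter.mp (min'_mem F hF)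
      left
      rw [parkStep, dif_pos hF, map_insert]
      refine ⟨hp, circStep_map_castSucc (Fin.castSucc_le_castSucc_iff.mpr hx.2) ?_ ?_⟩
      · simpa using (mem_sdiff.mp hx.1).2
      · exact fun y hcy hyx => by_contra fun hy =>
          (Fin.castSucc_lt_castSucc_iff.mp hyx).not_ge (min'_le F y (hfree y hcy hy))
    · right
      rw [parkStep, dif_neg hF, circStep_map_castSucc (Fin.le_last _)]
      · exact ⟨Nat.succ_ne_zero _, mem_insert_self _ _⟩
      · simp [Fin.castSucc_ne_last]
      · exact fun y hcy _ => by_contra fun hy => hF ⟨y, hfree y hcy hy⟩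
  · right
    refine ⟨?_, subset_circStep _ _ hT⟩
    unfold parkStep
    split <;> simp [hp]

lemma synced_foldl (l : List (Fin n)) {p : Finset (Fin n) × ℕ} {T : Finset (Fin (n + 1))}
    (h : Synced p T) : Synced (l.foldl parkStep p) ((l.map Fin.castSucc).foldl circStep T) := by
  induction l generalizing p T with
  | nil => exact h
  | cons c l ih => exact ih (synced_parkStep h c)

variable {m : ℕ}

lemma defect_eq_zero_iff (f : Fin m → Fin n) :
    defect f = 0 ↔ Fin.last n ∉ circRun (Fin.castSucc ∘ f) := by
  have hrun : Synced (parkRun f) (circRun (Fin.castSucc ∘ f)) := by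
    have := synced_foldl (List.ofFn f) (Or.inl ⟨rfl, (map_empty _).symm⟩ : Synced (∅, 0) ∅)
    rwa [List.map_ofFn] at this
  rcases hrun with ⟨hf, hT⟩ | ⟨hf, hT⟩
  · simp [defect, hf, hT, Fin.castSucc_ne_last]
  · simp [defect, hf, hT]

lemma cp_zero_eq_card_filter_last_notMem_circRun :
    cp n m 0 = #{g : Fin m → Fin (n + 1) | Fin.last n ∉ circRun g} := by
  refine card_bij (fun f _ => Fin.castSucc ∘ f) (fun f hf => ?_)
    (fun f _ f' _ h => funext fun i => Fin.castSucc_injective n (congrFun h i)) (fun g hg => ?_)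
  · simpa [← defect_eq_zero_iff] using hf
  · have hg : Fin.last n ∉ circRun g := (mem_filter.mp hg).2
    have hne : ∀ i, g i ≠ Fin.last n := fun i he => hg (he ▸ mem_circRun g i)
    have hcomp : Fin.castSucc ∘ (fun i => (g i).castPred (hne i)) = g :=
      funext fun i => Fin.castSucc_castPred _ _
    refine ⟨_, ?_, hcomp⟩
    rw [mem_filter, defect_eq_zero_iff, hcomp]
    exact ⟨mem_univ _, hg⟩

end Linear

end Parking

open Parking in
/-- `a(r,s,0) = cp (r+s) s 0 = (r+1)·(r+s+1)^(s-1)`, with the `s = 0` case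
interpreted as `1`. -/
theorem stmt4 (r s : ℕ) :
    cp (r + s) s 0 = if s = 0 then 1 else (r + 1) * (r + s + 1) ^ (s - 1) := by
  have h := mul_card_filter_notMem_circRun (N := r + s + 1) (m := s) (Fin.last (r + s)) (by omega)
  rw [show r + s + 1 - s = r + 1 by omega] at h
  rw [cp_zero_eq_card_filter_last_notMem_circRun]
  split_ifs with hs
  · subst hs
    simpa using h
  · obtain ⟨s, rfl⟩ := Nat.exists_eq_succ_of_ne_zero hs
    rw [pow_succ', mul_assoc] at h
    simpa [mul_comm] using Nat.eq_of_mul_eq_mul_left (Nat.succ_pos _) h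
end

section
/- Abel's binomial identity: for all real numbers a, b and every m ∈ ℕ, Σ_{i=0}^{m} C(m,i) · a · (a+i)^(i-1) · (b-i)^(m-i) = (a+b)^m, where for i such that a+i = 0 the term a·(a+i)^(i-1) is interpreted appropriately (e.g., for a ≠ 0, -1, ..., -m). -/
/-!
Both sides are polynomials in `b`. Differentiating the left-hand side for exponent `m + 1` in `b`
gives `(m + 1)` times the left-hand side for exponent `m`, so by induction the two sides differ by
a constant. At `b = -a` the right-hand side vanishes, and the left-hand side becomes
`a · ∑ (-1)^(m+1-i) C(m+1,i) (a+i)^m`, an `(m+1)`-st forward difference of a polynomial of degree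
`m`, hence also `0`.
-/

open Finset

theorem sum_neg_one_pow_mul_choose_mul_add_pow_eq_zero {R : Type*} [CommRing R] {j n : ℕ}
    (h : j < n) (x : R) :
    ∑ k ∈ range (n + 1), (-1) ^ (n - k) * (n.choose k : R) * (x + k) ^ j = 0 := by
  simpa [fwdDiff_iter_eq_sum_shift, zsmul_eq_mul] using
    congr_fun (fwdDiff_iter_pow_eq_zero_of_lt (R := R) h) x

-- At `i = 0` this is `a * a⁻¹ * a = a`, which holds even for `a = 0`.
theorem mul_add_zpow_sub_one_mul_add_pow {K : Type*} [DivisionRing K] (a : K) {i n : ℕ}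
    (hi : i ≤ n + 1) :
    a * (a + i) ^ ((i : ℤ) - 1) * (a + i) ^ (n + 1 - i) = a * (a + i) ^ n := by
  cases i with
  | zero => simp [pow_succ', ← mul_assoc, mul_inv_mul_cancel]
  | succ i =>
    rw [show ((i + 1 : ℕ) : ℤ) - 1 = i by push_cast; ring, zpow_natCast, mul_assoc, ← pow_add]
    congr 2
    omega

section Abel

variable {𝕜 : Type*} [RCLike 𝕜]

def abelSum (m : ℕ) (a b : 𝕜) : 𝕜 :=
  ∑ i ∈ range (m + 1), (m.choose i : 𝕜) * a * (a + i) ^ ((i : ℤ) - 1) * (b - i) ^ (m - i)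

theorem abelSum_neg_self (m : ℕ) (a : 𝕜) : abelSum (m + 1) a (-a) = 0 := by
  have hterm : ∀ i ∈ range (m + 2), ((m + 1).choose i : 𝕜) * a * (a + i) ^ ((i : ℤ) - 1) *
      (-a - i) ^ (m + 1 - i) = a * ((-1) ^ (m + 1 - i) * ((m + 1).choose i : 𝕜) * (a + i) ^ m) := by
    intro i hi
    have key := mul_add_zpow_sub_one_mul_add_pow a (Nat.lt_succ_iff.mp (mem_range.mp hi))
    rw [show -a - i = -1 * (a + i) by ring, mul_pow]
    linear_combination (-1) ^ (m + 1 - i) * ((m + 1).choose i : 𝕜) * key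
  rw [abelSum, sum_congr rfl hterm, ← mul_sum,
    sum_neg_one_pow_mul_choose_mul_add_pow_eq_zero (Nat.lt_succ_self m), mul_zero]

theorem hasDerivAt_abelSum (m : ℕ) (a x : 𝕜) :
    HasDerivAt (abelSum (m + 1) a) ((m + 1) * abelSum m a x) x := by
  have hterm : ∀ i ∈ range (m + 2), HasDerivAt
      (fun b ↦ ((m + 1).choose i : 𝕜) * a * (a + i) ^ ((i : ℤ) - 1) * (b - i) ^ (m + 1 - i))
      (((m + 1).choose i : 𝕜) * a * (a + i) ^ ((i : ℤ) - 1) *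
        ((m + 1 - i : ℕ) * (x - i) ^ (m + 1 - i - 1) * 1)) x :=
    fun i _ ↦ (((hasDerivAt_id x).sub_const (i : 𝕜)).pow _).const_mul _
  refine (HasDerivAt.fun_sum hterm).congr_deriv ?_
  rw [sum_range_succ, Nat.sub_self, Nat.cast_zero, zero_mul, zero_mul, mul_zero, add_zero,
    abelSum, mul_sum]
  refine sum_congr rfl fun i hi ↦ ?_
  have hchoose : ((m + 1).choose i : 𝕜) * (m + 1 - i : ℕ) = (m + 1) * m.choose i := by
    rw [← Nat.cast_mul, ← Nat.choose_mul_succ_eq]; push_cast; ring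
  rw [show m + 1 - i - 1 = m - i by omega]
  linear_combination a * (a + i) ^ ((i : ℤ) - 1) * (x - i) ^ (m - i) * hchoose

theorem abelSum_eq_add_pow (m : ℕ) {a : 𝕜} (ha : a ≠ 0) (b : 𝕜) :
    abelSum m a b = (a + b) ^ m := by
  induction m generalizing b with
  | zero => simp [abelSum, ha]
  | succ m ih =>
    have hderiv : ∀ x, HasDerivAt (fun b ↦ abelSum (m + 1) a b - (a + b) ^ (m + 1)) 0 x := by
      intro x
      refine ((hasDerivAt_abelSum m a x).sub
        (((hasDerivAt_id x).const_add a).pow (m + 1))).congr_deriv ?_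
      simp [ih]
    have hconst := is_const_of_deriv_eq_zero (fun x ↦ (hderiv x).differentiableAt)
      (fun x ↦ (hderiv x).deriv) b (-a)
    simpa [abelSum_neg_self, sub_eq_zero] using hconst

end Abel

/-- Abel's binomial identity: for real `a, b` with `a ∉ {0, -1, ..., -m}`,
`Σ_{i=0}^{m} C(m,i) · a · (a+i)^(i-1) · (b-i)^(m-i) = (a+b)^m`,
where `(a+i)^(i-1)` is a real `zpow` (so the `i = 0` term is `a · a⁻¹ · b^m = b^m`). -/
theorem stmt5 (m : ℕ) (a b : ℝ) (ha : ∀ i : ℕ, i ≤ m → a + i ≠ 0) :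
    ∑ i ∈ Finset.range (m + 1),
      (m.choose i : ℝ) * a * (a + i) ^ ((i : ℤ) - 1) * (b - i) ^ (m - i) = (a + b) ^ m :=
  abelSum_eq_add_pow m (by simpa using ha 0 m.zero_le) b
end

section
/- For natural numbers n, m with m ≤ n: Σ_{i=0}^{m} C(m,i) · (n-m) · (n-m+i)^(i-1) · (m-i)^(m-i) = n^m, where the i = 0 term is interpreted as (m)^m (i.e., (n-m)·(n-m)^(-1)·m^m) when n > m. -/
/-!
Abel's identity `∑ₖ C(m,k) x (x+k)^(k-1) (y-k)^(m-k) = (x+y)^m`, proved by induction on `m` as a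
polynomial identity in `y`. Since `(m-k) C(m,k) = m C(m-1,k)`, the `y`-derivative of the `m`-th Abel
sum is `m` times the `(m-1)`-st one, which by induction is the derivative of `(x+y)^m`. So the two
sides differ by a constant, which is zero because at `y = -x` the Abel sum becomes `x` times an
`m`-th finite difference of `(x+k)^(m-1)`, a polynomial of degree `< m`.
-/

open Finset Polynomial

namespace Abel

variable {R : Type*} [CommRing R]

theorem sum_neg_one_pow_mul_choose_mul_add_pow_eq_zero {j n : ℕ} (h : j < n) (x : R) :
    ∑ k ∈ range (n + 1), (-1) ^ (n - k) * n.choose k * (x + k) ^ j = 0 := by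
  have := congrFun (fwdDiff_iter_pow_eq_zero_of_lt (R := R) h) x
  rw [fwdDiff_iter_eq_sum_shift] at this
  simpa [zsmul_eq_mul] using this

/-- At `k = 0` this is the formal value `x · x⁻¹ = 1` of `x (x + k)^(k - 1)`. -/
def abelCoeff (x : R) (k : ℕ) : R := if k = 0 then 1 else x * (x + k) ^ (k - 1)

noncomputable def abelPoly (m : ℕ) (x : R) : R[X] :=
  ∑ k ∈ range (m + 1), C (m.choose k * abelCoeff x k) * (X - C (k : R)) ^ (m - k)

theorem derivative_abelPoly_succ (m : ℕ) (x : R) :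
    derivative (abelPoly (m + 1) x) = C (m + 1 : R) * abelPoly m x := by
  rw [abelPoly, sum_range_succ, Nat.sub_self, pow_zero, mul_one, derivative_add, derivative_C,
    add_zero, derivative_sum, abelPoly, mul_sum]
  refine sum_congr rfl fun k hk => ?_
  have hkm : k ≤ m := Nat.lt_succ_iff.mp (mem_range.mp hk)
  have hcoeff : ((m + 1).choose k * abelCoeff x k : R) * (m + 1 - k : ℕ) =
      (m + 1) * (m.choose k * abelCoeff x k) := by
    rw [mul_right_comm, ← Nat.cast_mul, ← Nat.choose_mul_succ_eq]; push_cast; ring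
  rw [derivative_C_mul, derivative_X_sub_C_pow, show m + 1 - k - 1 = m - k by omega, ← mul_assoc,
    ← C_mul, hcoeff, C_mul, mul_assoc]

theorem eval_neg_abelPoly {m : ℕ} (hm : m ≠ 0) (x : R) : (abelPoly m x).eval (-x) = 0 := by
  have key : (abelPoly m x).eval (-x) =
      x * ∑ k ∈ range (m + 1), (-1) ^ (m - k) * m.choose k * (x + k) ^ (m - 1) := by
    rw [abelPoly, eval_finsetSum, mul_sum]
    refine sum_congr rfl fun k hk => ?_
    have hkm : k ≤ m := Nat.lt_succ_iff.mp (mem_range.mp hk)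
    simp only [eval_mul, eval_C, eval_pow, eval_sub, eval_X, abelCoeff]
    split_ifs with hk0
    · subst hk0
      obtain ⟨e, rfl⟩ := Nat.exists_eq_add_one_of_ne_zero hm
      simp only [Nat.choose_zero_right, Nat.cast_zero, Nat.cast_one, Nat.sub_zero,
        Nat.add_sub_cancel, add_zero, sub_zero]
      ring
    · rw [show -x - (k : R) = (-1) * (x + k) by ring, mul_pow,
        show m - 1 = (k - 1) + (m - k) by omega, pow_add]
      ring
  rw [key, sum_neg_one_pow_mul_choose_mul_add_pow_eq_zero (by omega), mul_zero]

theorem abelPoly_eq_X_add_C_pow [IsAddTorsionFree R] (m : ℕ) (x : R) :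
    abelPoly m x = (X + C x) ^ m := by
  induction m with
  | zero => simp [abelPoly, abelCoeff]
  | succ m ih =>
    set p := abelPoly (m + 1) x - (X + C x) ^ (m + 1)
    have hderiv : derivative p = 0 := by
      rw [derivative_sub, derivative_abelPoly_succ, ih, derivative_X_add_C_pow]
      simp
    have hroot : p.eval (-x) = 0 := by
      simp [p, eval_neg_abelPoly (Nat.succ_ne_zero m)]
    have hconst := eq_C_of_derivative_eq_zero hderiv
    rw [hconst, eval_C] at hroot
    exact sub_eq_zero.mp (hconst.trans (by rw [hroot, C_0]))

theorem sum_choose_mul_abelCoeff_mul_sub_pow [IsAddTorsionFree R] (m : ℕ) (x y : R) :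
    ∑ k ∈ range (m + 1), m.choose k * abelCoeff x k * (y - k) ^ (m - k) = (x + y) ^ m := by
  simpa [abelPoly, eval_finsetSum, add_comm x] using congrArg (eval y) (abelPoly_eq_X_add_C_pow m x)

end Abel

/-- The special case `a = n - m`, `b = m` of Abel's binomial identity, over ℕ:
`Σ_{i=0}^{m} C(m,i)·(n-m)·(n-m+i)^(i-1)·(m-i)^(m-i) = n^m`, where the `i = 0`
term is interpreted as `m^m`. -/
theorem stmt6 (n m : ℕ) (hmn : m ≤ n) :
    ∑ i ∈ Finset.range (m + 1),
      (if i = 0 then m ^ m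
       else Nat.choose m i * (n - m) * (n - m + i) ^ (i - 1) * (m - i) ^ (m - i)) = n ^ m := by
  have habel := Abel.sum_choose_mul_abelCoeff_mul_sub_pow m ((n - m : ℕ) : ℤ) m
  rw [← Nat.cast_add, Nat.sub_add_cancel hmn] at habel
  rw [← Nat.cast_inj (R := ℤ), Nat.cast_sum, Nat.cast_pow, ← habel]
  refine sum_congr rfl fun i hi => ?_
  have him : i ≤ m := Nat.lt_succ_iff.mp (mem_range.mp hi)
  rcases eq_or_ne i 0 with rfl | hi0
  · simp [Abel.abelCoeff]
  · rw [if_neg hi0, Abel.abelCoeff, if_neg hi0]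
    push_cast [Nat.cast_sub him]
    ring
end

section
/- For n, m, k ∈ ℕ with k > m-n, S(n,m,k) ≤ (m!/(m-k)!) · n^(m-k). -/
open Finset

/-- The Abel-type partial sum `S(n,m,k)`: it equals `n^m` when `k ≤ m - n`
(i.e. `n + k ≤ m`) and `Σ_{i=0}^{m-k} C(m,i)·(n-m+k)·(n-m+k+i)^(i-1)·(m-k-i)^(m-i)`
otherwise, the `i = 0` term being interpreted as `(m-k)^m`. -/
def S (n m k : ℕ) : ℕ :=
  if n + k ≤ m then n ^ m
  else ∑ i ∈ Finset.range (m - k + 1),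
    if i = 0 then (m - k) ^ m
    else Nat.choose m i * (n + k - m) * (n + k - m + i) ^ (i - 1) * (m - k - i) ^ (m - i)

/-! Write `N = m - k` and `x = n - N`. Each summand of `S n m k` is the matching summand of Abel's
identity `∑ C(N,i)·x(x+i)^(i-1)·(N-i)^(N-i) = (x+N)^N` times `C(m,i)(N-i)^k / C(N,i)`, and this
factor is at most `m!/N!`. Abel's identity, with `N - i` shifted by a variable `y`, is proved by
induction on `N`: both sides have derivative `N` times the previous case at `y + 1`, and both
vanish at `y = -(x + N)`, where the left side becomes an `N`-th finite difference of a polynomial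
of degree `N - 1`. -/

open Polynomial

-- `x (x + i) ^ (i - 1)`, read as `x · x⁻¹ = 1` at `i = 0`.
def abelCoeff {R : Type*} [Semiring R] (x : R) : ℕ → R
  | 0 => 1
  | i + 1 => x * (x + (i + 1 : ℕ)) ^ i

@[simp, norm_cast]
lemma Nat.cast_abelCoeff {R : Type*} [Semiring R] (x i : ℕ) :
    ((abelCoeff x i : ℕ) : R) = abelCoeff (x : R) i := by
  cases i <;> simp [abelCoeff]

lemma abelCoeff_mul_pow {R : Type*} [CommSemiring R] (x : R) {i N : ℕ} (h : i ≤ N + 1) :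
    abelCoeff x i * (x + i) ^ (N + 1 - i) = x * (x + i) ^ N := by
  cases i with
  | zero => simp [abelCoeff, pow_succ']
  | succ j => rw [abelCoeff, mul_assoc, ← pow_add]; congr 2; omega

lemma sum_range_neg_one_pow_mul_choose_mul_pow_eq_zero {R : Type*} [CommRing R] (x : R)
    {N M : ℕ} (h : N < M) :
    ∑ i ∈ range (M + 1), (-1 : R) ^ (M - i) * M.choose i * (x + i) ^ N = 0 := by
  have := congr_fun (fwdDiff_iter_pow_eq_zero_of_lt (R := R) h) x
  rw [fwdDiff_iter_eq_sum_shift] at this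
  simpa [zsmul_eq_mul] using this

section

variable {R : Type*} [CommRing R]

lemma Polynomial.eq_of_derivative_eq_of_eval_eq [IsAddTorsionFree R]
    {p q : R[X]} (h : derivative p = derivative q) (t : R) (ht : p.eval t = q.eval t) :
    p = q := by
  have hC := eq_C_of_derivative_eq_zero (p := p - q) (by rw [derivative_sub, h, sub_self])
  have h0 : (p - q).coeff 0 = 0 := by
    simpa [ht] using (congr_arg (eval t) hC).symm
  rw [← sub_eq_zero, hC, h0, C_0]

noncomputable def abelPoly (x : R) (N : ℕ) : R[X] :=
  ∑ i ∈ range (N + 1), C (N.choose i * abelCoeff x i) * (X + C ((N - i : ℕ) : R)) ^ (N - i)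

lemma derivative_abelPoly_succ (x : R) (N : ℕ) :
    derivative (abelPoly x (N + 1)) = C ((N + 1 : ℕ) : R) * (abelPoly x N).comp (X + 1) := by
  rw [abelPoly, derivative_sum, sum_range_succ, Nat.sub_self, pow_zero, mul_one,
    derivative_C, add_zero, abelPoly, Polynomial.sum_comp, mul_sum]
  refine sum_congr rfl fun i hi => ?_
  have hi : i ≤ N := Nat.lt_succ_iff.mp (mem_range.mp hi)
  have hchoose : ((N + 1 - i : ℕ) : R) * (N + 1).choose i = (N + 1 : ℕ) * N.choose i := by
    rw [← Nat.cast_mul, ← Nat.cast_mul, mul_comm, ← Nat.choose_mul_succ_eq, mul_comm]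
  have hexp : N + 1 - i = N - i + 1 := by omega
  rw [derivative_C_mul, hexp, derivative_pow_succ]
  simp only [derivative_add, derivative_X, derivative_C, add_zero, mul_one, mul_comp, C_comp,
    pow_comp, add_comp, X_comp, ← hexp]
  have hX : X + C ((N + 1 - i : ℕ) : R) = X + 1 + C ((N - i : ℕ) : R) := by
    rw [hexp, Nat.cast_succ, C_add, C_1]; ring
  rw [hX, ← mul_assoc, ← mul_assoc, ← C_mul, ← C_mul]
  congr 2
  rw [hexp] at hchoose
  push_cast at hchoose ⊢
  linear_combination abelCoeff x i * hchoose

lemma eval_abelPoly_succ (x : R) (N : ℕ) :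
    (abelPoly x (N + 1)).eval (-(x + (N + 1 : ℕ))) = 0 := by
  have hterm : ∀ i ∈ range (N + 1 + 1),
      ((N + 1).choose i * abelCoeff x i) *
          (-(x + (N + 1 : ℕ)) + ((N + 1 - i : ℕ) : R)) ^ (N + 1 - i)
        = x * ((-1) ^ (N + 1 - i) * (N + 1).choose i * (x + i) ^ N) := by
    intro i hi
    have hi : i ≤ N + 1 := Nat.lt_succ_iff.mp (mem_range.mp hi)
    rw [Nat.cast_sub hi, show -(x + (N + 1 : ℕ)) + ((N + 1 : ℕ) - i : R) = -1 * (x + i) by ring,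
      mul_pow, mul_assoc, mul_left_comm (abelCoeff x i), abelCoeff_mul_pow x hi]
    ring
  simp only [abelPoly, eval_finsetSum, eval_mul, eval_C, eval_pow, eval_add, eval_X]
  rw [sum_congr rfl hterm, ← mul_sum,
    sum_range_neg_one_pow_mul_choose_mul_pow_eq_zero x N.lt_succ_self, mul_zero]

theorem abelPoly_eq_pow [IsAddTorsionFree R] (x : R) (N : ℕ) :
    abelPoly x N = (X + C (x + N)) ^ N := by
  induction N with
  | zero => simp [abelPoly, abelCoeff]
  | succ N ih =>
    refine eq_of_derivative_eq_of_eval_eq ?_ (-(x + (N + 1 : ℕ))) ?_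
    · rw [derivative_abelPoly_succ, ih, derivative_pow]
      simp only [pow_comp, add_comp, X_comp, C_comp, derivative_add, derivative_X, derivative_C,
        derivative_one, Nat.add_sub_cancel, C_add, Nat.cast_succ, C_1]
      ring
    · rw [eval_abelPoly_succ]
      simp

end

theorem sum_range_choose_mul_abelCoeff_mul_pow (x N : ℕ) :
    ∑ i ∈ range (N + 1), N.choose i * abelCoeff x i * (N - i) ^ (N - i) = (x + N) ^ N := by
  have := congr_arg (eval 0) (abelPoly_eq_pow (x : ℤ) N)
  simp only [abelPoly, eval_finsetSum, eval_mul, eval_C, eval_pow, eval_add, eval_X,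
    zero_add] at this
  exact_mod_cast this

lemma Nat.choose_mul_descFactorial_sub (m i k : ℕ) :
    m.choose i * (m - i).descFactorial k = m.descFactorial k * (m - k).choose i := by
  have h1 := Nat.choose_mul (n := m) (k := i + k) (s := i) (by omega)
  have h2 := Nat.choose_mul (n := m) (k := i + k) (s := k) (by omega)
  rw [Nat.add_sub_cancel_left] at h1
  rw [Nat.add_sub_cancel, ← Nat.choose_symm_add] at h2
  rw [Nat.descFactorial_eq_factorial_mul_choose, Nat.descFactorial_eq_factorial_mul_choose]
  linear_combination (k.factorial : ℕ) * (h2 - h1)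

lemma Nat.choose_mul_pow_le_descFactorial_mul {m k i : ℕ} (hk : k ≤ m) (hi : i ≤ m - k) :
    m.choose i * (m - k - i) ^ (m - i)
      ≤ m.descFactorial k * ((m - k).choose i * (m - k - i) ^ (m - k - i)) := by
  have hexp : m - i = m - k - i + k := by omega
  have hpow : (m - k - i) ^ k ≤ (m - i).descFactorial k :=
    (Nat.pow_le_pow_left (by omega) k).trans (Nat.pow_sub_le_descFactorial _ _)
  calc m.choose i * (m - k - i) ^ (m - i)
      = m.choose i * (m - k - i) ^ k * (m - k - i) ^ (m - k - i) := by rw [hexp, pow_add]; ring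
    _ ≤ m.choose i * (m - i).descFactorial k * (m - k - i) ^ (m - k - i) := by gcongr
    _ = m.descFactorial k * ((m - k).choose i * (m - k - i) ^ (m - k - i)) := by
      rw [Nat.choose_mul_descFactorial_sub, mul_assoc]

lemma S_eq_sum_abelCoeff {n m k : ℕ} (h : m < n + k) :
    S n m k = ∑ i ∈ range (m - k + 1),
      m.choose i * abelCoeff (n + k - m) i * (m - k - i) ^ (m - i) := by
  rw [S, if_neg (by omega)]
  refine sum_congr rfl fun i _ => ?_
  cases i <;> simp [abelCoeff, mul_assoc]

theorem stmt15 (n m k : ℕ) (h : m < n + k) :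
    S n m k ≤ (Nat.factorial m / Nat.factorial (m - k)) * n ^ (m - k) := by
  rw [S_eq_sum_abelCoeff h]
  rcases le_or_gt m k with hmk | hkm
  · simp only [Nat.sub_eq_zero_of_le hmk, zero_add, range_one, sum_singleton, abelCoeff,
      Nat.choose_zero_right, mul_one, one_mul, tsub_zero, Nat.factorial_zero, Nat.div_one,
      pow_zero]
    exact (pow_le_one₀ le_rfl zero_le_one).trans (Nat.one_le_iff_ne_zero.mpr m.factorial_ne_zero)
  · rw [← Nat.descFactorial_eq_div hkm.le]
    calc ∑ i ∈ range (m - k + 1), m.choose i * abelCoeff (n + k - m) i * (m - k - i) ^ (m - i)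
        ≤ ∑ i ∈ range (m - k + 1), m.descFactorial k *
            ((m - k).choose i * abelCoeff (n + k - m) i * (m - k - i) ^ (m - k - i)) := by
          refine sum_le_sum fun i hi => ?_
          have hcoeff := Nat.choose_mul_pow_le_descFactorial_mul hkm.le
            (Nat.lt_succ_iff.mp (mem_range.mp hi))
          calc _ = m.choose i * (m - k - i) ^ (m - i) * abelCoeff (n + k - m) i := by ring
            _ ≤ _ := Nat.mul_le_mul_right _ hcoeff
            _ = _ := by ring
      _ = m.descFactorial k * (n + k - m + (m - k)) ^ (m - k) := by
          rw [← mul_sum, sum_range_choose_mul_abelCoeff_mul_pow]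
      _ = m.descFactorial k * n ^ (m - k) := by congr 2; omega
end
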